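/- Let E be a normed space, V ⊂ E an open set, and (v_k^ε)_{ε>0}, v_k ∈ E for k = 0, …, t sequences such that v_0^ε = v_0, and for each step either (a) v_{k-1} ∈ V and ‖v_k^ε − v_k‖ ≤ ‖v_{k-1}^ε − v_{k-1}‖ + ε whenever v_{k-1}^ε ∈ V, or (b) v_{k-1} ∈ (closure V)^c and v_k = v_{k-1}, v_k^ε = v_{k-1}^ε whenever v_{k-1}^ε ∈ V^c. Assume additionally that v_{k-1} ∉ ∂V for all k. Then for every k ≤ t, ‖v_k^ε − v_k‖ → 0 as ε → 0. -/

import Mathlib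

/-! Induction on `k`. Since `V` and `(closure V)ᶜ` are open and `v ε (k - 1) → w (k - 1)`,
eventually `v ε (k - 1)` lies in the same one of these sets as `w (k - 1)`, so the chains take
the same branch: there the error grows by at most `ε`, or both chains stand still. -/

open Filter Set Topology

section
variable {E : Type*} [SeminormedAddCommGroup E] {V : Set E} {a b : ℝ → E} {x : E}

theorem eventually_mem_of_tendsto_norm_sub_zero {α : Type*} {l : Filter α} {f : α → E}
    {U : Set E} (hU : IsOpen U) (hx : x ∈ U) (hf : Tendsto (fun i => ‖f i - x‖) l (𝓝 0)) :
    ∀ᶠ i in l, f i ∈ U :=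
  (tendsto_iff_norm_sub_tendsto_zero.2 hf).eventually (hU.mem_nhds hx)

theorem tendsto_norm_sub_of_step_inside {y : E} (hV : IsOpen V) (hx : x ∈ V)
    (ha : Tendsto (fun ε => ‖a ε - x‖) (𝓝[>] 0) (𝓝 0))
    (hstep : ∀ ε : ℝ, 0 < ε → a ε ∈ V → ‖b ε - y‖ ≤ ‖a ε - x‖ + ε) :
    Tendsto (fun ε => ‖b ε - y‖) (𝓝[>] 0) (𝓝 0) := by
  have hle : ∀ᶠ ε in 𝓝[>] (0 : ℝ), ‖b ε - y‖ ≤ ‖a ε - x‖ + ε := by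
    filter_upwards [eventually_mem_of_tendsto_norm_sub_zero hV hx ha, self_mem_nhdsWithin]
      with ε haV hε
    exact hstep ε hε haV
  have hbound : Tendsto (fun ε => ‖a ε - x‖ + ε) (𝓝[>] 0) (𝓝 0) := by
    simpa using ha.add (tendsto_nhdsWithin_of_tendsto_nhds tendsto_id)
  exact squeeze_zero' (.of_forall fun _ => norm_nonneg _) hle hbound

theorem tendsto_norm_sub_of_step_outside (hx : x ∈ (closure V)ᶜ)
    (ha : Tendsto (fun ε => ‖a ε - x‖) (𝓝[>] 0) (𝓝 0))
    (hstep : ∀ ε : ℝ, 0 < ε → a ε ∉ V → b ε = a ε) :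
    Tendsto (fun ε => ‖b ε - x‖) (𝓝[>] 0) (𝓝 0) := by
  refine ha.congr' ?_
  filter_upwards [eventually_mem_of_tendsto_norm_sub_zero isClosed_closure.isOpen_compl hx ha,
    self_mem_nhdsWithin] with ε haV hε
  rw [hstep ε hε fun h => haV (subset_closure h)]

end

theorem discretized_chain_convergence_general
    {E : Type*} [NormedAddCommGroup E]
    (V : Set E) (hV : IsOpen V)
    (t : ℕ) (v : ℝ → ℕ → E) (w : ℕ → E)
    (hinit : ∀ ε : ℝ, 0 < ε → v ε 0 = w 0)
    (hstep : ∀ k : ℕ, 1 ≤ k → k ≤ t →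
      (w (k - 1) ∈ V ∧
        ∀ ε : ℝ, 0 < ε → v ε (k - 1) ∈ V →
          ‖v ε k - w k‖ ≤ ‖v ε (k - 1) - w (k - 1)‖ + ε) ∨
      (w (k - 1) ∈ (closure V)ᶜ ∧ w k = w (k - 1) ∧
        ∀ ε : ℝ, 0 < ε → v ε (k - 1) ∉ V → v ε k = v ε (k - 1))) :
    ∀ k : ℕ, k ≤ t →
      Tendsto (fun ε : ℝ => ‖v ε k - w k‖) (nhdsWithin 0 (Ioi 0)) (nhds 0) := by
  intro k hk
  induction k with
  | zero =>
    refine tendsto_const_nhds.congr' (eventually_nhdsWithin_of_forall fun ε hε => ?_)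
    simp [hinit ε hε]
  | succ n ih =>
    have hs := hstep (n + 1) (by omega) hk
    rw [Nat.add_sub_cancel] at hs
    rcases hs with ⟨hwV, hle⟩ | ⟨hwC, hw, hv⟩
    · exact tendsto_norm_sub_of_step_inside hV hwV (ih (by omega)) hle
    · rw [hw]
      exact tendsto_norm_sub_of_step_outside hwC (ih (by omega)) hv

theorem discretized_chain_convergence
    {E : Type*} [NormedAddCommGroup E]
    (V : Set E) (hV : IsOpen V)
    (t : ℕ) (v : ℝ → ℕ → E) (w : ℕ → E)
    (hinit : ∀ ε : ℝ, 0 < ε → v ε 0 = w 0)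
    (hboundary : ∀ k : ℕ, 1 ≤ k → k ≤ t → w (k - 1) ∉ frontier V)
    (hstep : ∀ k : ℕ, 1 ≤ k → k ≤ t →
      (w (k - 1) ∈ V ∧
        ∀ ε : ℝ, 0 < ε → v ε (k - 1) ∈ V →
          ‖v ε k - w k‖ ≤ ‖v ε (k - 1) - w (k - 1)‖ + ε) ∨
      (w (k - 1) ∈ (closure V)ᶜ ∧ w k = w (k - 1) ∧
        ∀ ε : ℝ, 0 < ε → v ε (k - 1) ∉ V → v ε k = v ε (k - 1))) :
    ∀ k : ℕ, k ≤ t →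
      Tendsto (fun ε : ℝ => ‖v ε k - w k‖) (nhdsWithin 0 (Ioi 0)) (nhds 0) :=
  discretized_chain_convergence_general V hV t v w hinit hstep
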